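/- arXiv:2406.02995 — 5 statements merged into one kernel-verified Lean document; each statement's English description precedes it below -/
import Mathlib

section
/- Let 0 ≤ θ ≤ 1 and let ‖·‖₀, ‖·‖₁, ‖·‖_θ be norms on ℝ^N with dual norms ‖·‖₀*, ‖·‖₁*, ‖·‖_θ*. Suppose ‖x‖_θ* ≤ (‖x‖₁*)^θ (‖x‖₀*)^{1-θ} for all x ∈ ℝ^N. Then the Kolmogorov n-width of the unit ball B_θ of ‖·‖_θ in the space (ℝ^N, ‖·‖₁) satisfies d_n(B_θ, X₁) ≤ (d_n(B₀, X₁))^{1-θ}, where B₀ is the unit ball of ‖·‖₀. -/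
open scoped ENNReal NNReal BigOperators

/-- The Kolmogorov `n`-width `d_n(M, X)` of `M` in the space with norm `nrm`:
the infimum over subspaces `L` of dimension at most `n` of
`sup_{x ∈ M} inf_{y ∈ L} ‖x - y‖`. -/
noncomputable def kolWidth {V : Type*} [AddCommGroup V] [Module ℝ V] (n : ℕ)
    (M : Set V) (nrm : V → ℝ) : ℝ≥0∞ :=
  ⨅ L : {L : Submodule ℝ V // Module.finrank ℝ (↥L) ≤ n},
    ⨆ x ∈ M, ⨅ y ∈ (L.1 : Set V), ENNReal.ofReal (nrm (x - y))

/-- The dual norm of `nrm` on `ℝ^N` w.r.t. the standard inner product. -/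
noncomputable def dualNorm {N : ℕ} (nrm : (Fin N → ℝ) → ℝ) (x : Fin N → ℝ) : ℝ :=
  ⨆ y : {y : Fin N → ℝ // nrm y ≤ 1}, ∑ i, x i * (y : Fin N → ℝ) i

/-! For a fixed subspace `L` and `x ∈ B_θ`, Hahn–Banach applied to the seminorm
`dist₁(·, L)` gives a functional `z` with `z x = dist₁(x, L)` and `z ≤ dist₁(·, L)`. Hence
`‖z‖₁* ≤ 1` and `‖z‖₀* ≤ sup_{B₀} dist₁(·, L)`, and the hypothesis on the dual norms yields
`dist₁(x, L) ≤ ‖z‖_θ* ≤ (sup_{B₀} dist₁(·, L))^{1-θ}`. Taking the infimum over `L` commutes with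
the increasing map `t ↦ t^{1-θ}`. -/

theorem ENNReal.iInf_rpow {ι : Sort*} [Nonempty ι] (f : ι → ℝ≥0∞) {p : ℝ} (hp : 0 ≤ p) :
    (⨅ i, f i) ^ p = ⨅ i, f i ^ p := by
  rcases hp.eq_or_lt with rfl | hp
  · simp
  · exact (orderIsoRpow p hp).map_iInf f

namespace Seminorm

theorem exists_linearMap_le_and_eq {E : Type*} [AddCommGroup E] [Module ℝ E]
    (p : Seminorm ℝ E) (x : E) :
    ∃ g : E →ₗ[ℝ] ℝ, (∀ y, g y ≤ p y) ∧ g x = p x := by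
  have hker : ∀ c : ℝ, c • x = 0 → c • p x = 0 := fun c hc => by
    rcases eq_or_ne c 0 with rfl | hc0
    · simp
    · simp [(smul_eq_zero.1 hc).resolve_left hc0]
  let f : E →ₗ.[ℝ] ℝ := LinearPMap.mkSpanSingleton' x (p x) hker
  obtain ⟨g, hgf, hgp⟩ := exists_extension_of_le_sublinear f p
    (fun c hc y => by rw [map_smul_eq_mul, Real.norm_of_nonneg hc.le]) (map_add_le_add p) <| by
      rintro ⟨_, hy⟩
      obtain ⟨c, rfl⟩ := Submodule.mem_span_singleton.1 hy
      rw [LinearPMap.mkSpanSingleton'_apply, map_smul_eq_mul, smul_eq_mul, RingHom.id_apply]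
      exact mul_le_mul_of_nonneg_right (Real.le_norm_self c) (apply_nonneg p x)
  refine ⟨g, hgp, ?_⟩
  exact (hgf ⟨x, Submodule.mem_span_singleton_self x⟩).trans
    (LinearPMap.mkSpanSingleton'_apply_self _ _ _ _)

section InfDist

variable {𝕜 E : Type*} [NormedField 𝕜] [AddCommGroup E] [Module 𝕜 E]

theorem bddBelow_range_apply_sub (p : Seminorm 𝕜 E) (L : Submodule 𝕜 E) (x : E) :
    BddBelow (Set.range fun y : L => p (x - y)) :=
  ⟨0, by rintro _ ⟨y, rfl⟩; exact apply_nonneg p _⟩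

noncomputable def infDist (p : Seminorm 𝕜 E) (L : Submodule 𝕜 E) : Seminorm 𝕜 E :=
  Seminorm.ofSMulLE (fun x => ⨅ y : L, p (x - y))
    (le_antisymm (ciInf_le_of_le (p.bddBelow_range_apply_sub L 0) 0 (by simp))
      (Real.iInf_nonneg fun _ => apply_nonneg p _))
    (fun x x' => le_ciInf_add_ciInf fun y y' =>
      ciInf_le_of_le (p.bddBelow_range_apply_sub L _) (y + y') <| by
        simpa only [Submodule.coe_add, add_sub_add_comm] using map_add_le_add p (x - y) (x' - y'))
    (fun r x => by
      rw [Real.mul_iInf_of_nonneg (norm_nonneg r)]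
      exact le_ciInf fun y =>
        ciInf_le_of_le (p.bddBelow_range_apply_sub L _) (r • y) <| by
          rw [Submodule.coe_smul, ← smul_sub, map_smul_eq_mul])

variable (p : Seminorm 𝕜 E) (L : Submodule 𝕜 E)

theorem infDist_apply (x : E) : p.infDist L x = ⨅ y : L, p (x - y) := rfl

theorem infDist_le {x y : E} (hy : y ∈ L) : p.infDist L x ≤ p (x - y) :=
  ciInf_le (p.bddBelow_range_apply_sub L x) (⟨y, hy⟩ : L)

theorem infDist_le_self (x : E) : p.infDist L x ≤ p x := by
  simpa using p.infDist_le L L.zero_mem (x := x)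

theorem ofReal_infDist (x : E) :
    ENNReal.ofReal (p.infDist L x) = ⨅ y ∈ (L : Set E), ENNReal.ofReal (p (x - y)) := by
  rw [infDist_apply, ENNReal.ofReal_iInf, iInf_subtype']
  rfl

end InfDist

section FiniteDimensional

variable {E : Type*} [NormedAddCommGroup E] [NormedSpace ℝ E] [FiniteDimensional ℝ E]

theorem continuous_of_finiteDimensional (p : Seminorm ℝ E) : Continuous p :=
  continuousOn_univ.1 (p.convexOn.continuousOn isOpen_univ)

theorem exists_pos_mul_norm_le (p : Seminorm ℝ E) (hp : ∀ x, p x = 0 → x = 0) :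
    ∃ c > 0, ∀ x, c * ‖x‖ ≤ p x := by
  rcases subsingleton_or_nontrivial E with _ | _
  · exact ⟨1, one_pos, fun x => by simp [Subsingleton.elim x 0]⟩
  obtain ⟨z, hz, hmin⟩ := (isCompact_sphere (0 : E) 1).exists_isMinOn
    (NormedSpace.sphere_nonempty.2 zero_le_one) p.continuous_of_finiteDimensional.continuousOn
  have hz1 : ‖z‖ = 1 := mem_sphere_zero_iff_norm.1 hz
  refine ⟨p z, (apply_nonneg p z).lt_of_ne' fun h => by simp [hp z h] at hz1, fun x => ?_⟩
  rcases eq_or_ne x 0 with rfl | hx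
  · simp
  have hx' : 0 < ‖x‖ := norm_pos_iff.2 hx
  calc p z * ‖x‖ ≤ p (‖x‖⁻¹ • x) * ‖x‖ := by
        gcongr
        exact hmin (a := ‖x‖⁻¹ • x) (by simp [norm_smul, hx'.ne'])
    _ = p x := by rw [map_smul_eq_mul, norm_inv, norm_norm]; field_simp

theorem isCompact_closedBall_zero (p : Seminorm ℝ E) (hp : ∀ x, p x = 0 → x = 0) (r : ℝ) :
    IsCompact (p.closedBall 0 r) := by
  obtain ⟨c, hc, hpc⟩ := p.exists_pos_mul_norm_le hp
  refine Metric.isCompact_of_isClosed_isBounded ?_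
    (isBounded_iff_forall_norm_le.2 ⟨r / c, fun y hy => ?_⟩)
  · simpa only [Seminorm.closedBall, sub_zero] using
      isClosed_le p.continuous_of_finiteDimensional continuous_const
  · rw [le_div_iff₀' hc]
    exact (hpc y).trans (p.mem_closedBall_zero.1 hy)

end FiniteDimensional

end Seminorm

section DualNorm

variable {N : ℕ} (f : Seminorm ℝ (Fin N → ℝ)) (z : Fin N → ℝ)

theorem dualNorm_eq : dualNorm f z = ⨆ y : {y // f y ≤ 1}, z ⬝ᵥ y := rfl

theorem dualNorm_nonneg : 0 ≤ dualNorm f z := by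
  rw [dualNorm_eq]
  by_cases hbdd : BddAbove (Set.range fun y : {y // f y ≤ 1} => z ⬝ᵥ y)
  · simpa using le_ciSup hbdd ⟨0, by simp⟩
  · rw [Real.iSup_of_not_bddAbove hbdd]

-- Definiteness keeps the ball bounded: otherwise the `iSup` in `dualNorm` is the junk value `0`.
theorem dotProduct_le_dualNorm (hf : ∀ x, f x = 0 → x = 0) {y : Fin N → ℝ} (hy : f y ≤ 1) :
    z ⬝ᵥ y ≤ dualNorm f z := by
  have hbdd := (f.isCompact_closedBall_zero hf 1).bddAbove_image (f := (z ⬝ᵥ ·))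
    (continuous_const.dotProduct continuous_id).continuousOn
  refine le_ciSup (f := fun y : {y // f y ≤ 1} => z ⬝ᵥ y) (hbdd.mono ?_) ⟨y, hy⟩
  rintro _ ⟨y, rfl⟩
  exact ⟨y, f.mem_closedBall_zero.2 y.2, rfl⟩

variable {f z}

theorem dualNorm_le {c : ℝ} (h : ∀ y, f y ≤ 1 → z ⬝ᵥ y ≤ c) : dualNorm f z ≤ c :=
  haveI : Nonempty {y // f y ≤ 1} := ⟨⟨0, by simp⟩⟩
  ciSup_le fun y => h y y.2

theorem ofReal_dualNorm_le {c : ℝ≥0∞} (h : ∀ y, f y ≤ 1 → ENNReal.ofReal (z ⬝ᵥ y) ≤ c) :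
    ENNReal.ofReal (dualNorm f z) ≤ c := by
  rcases eq_or_ne c ⊤ with rfl | hc
  · exact le_top
  rw [← ENNReal.ofReal_toReal hc]
  exact ENNReal.ofReal_le_ofReal <| dualNorm_le fun y hy =>
    (ENNReal.ofReal_le_iff_le_toReal hc).1 (h y hy)

end DualNorm

noncomputable def deviation {V : Type*} [AddCommGroup V] [Module ℝ V] (M : Set V) (nrm : V → ℝ)
    (L : Submodule ℝ V) : ℝ≥0∞ :=
  ⨆ x ∈ M, ⨅ y ∈ (L : Set V), ENNReal.ofReal (nrm (x - y))

theorem kolWidth_eq_iInf_deviation {V : Type*} [AddCommGroup V] [Module ℝ V] (n : ℕ) (M : Set V)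
    (nrm : V → ℝ) :
    kolWidth n M nrm = ⨅ L : {L : Submodule ℝ V // Module.finrank ℝ L ≤ n}, deviation M nrm L :=
  rfl

theorem Seminorm.ofReal_infDist_le_deviation {V : Type*} [AddCommGroup V] [Module ℝ V]
    (p : Seminorm ℝ V) {M : Set V} {x : V} (hx : x ∈ M) (L : Submodule ℝ V) :
    ENNReal.ofReal (p.infDist L x) ≤ deviation M p L :=
  (p.ofReal_infDist L x).trans_le <|
    le_iSup₂ (f := fun x (_ : x ∈ M) => ⨅ y ∈ (L : Set V), ENNReal.ofReal (p (x - y))) x hx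

theorem deviation_le_rpow {N : ℕ} {θ : ℝ} (hθ0 : 0 ≤ θ) (hθ1 : θ ≤ 1)
    {f0 f1 fθ : Seminorm ℝ (Fin N → ℝ)} (hθd : ∀ x, fθ x = 0 → x = 0)
    (hdual : ∀ x, dualNorm fθ x ≤ dualNorm f1 x ^ θ * dualNorm f0 x ^ (1 - θ))
    (L : Submodule ℝ (Fin N → ℝ)) :
    deviation {x | fθ x ≤ 1} f1 L ≤ deviation {x | f0 x ≤ 1} f1 L ^ (1 - θ) := by
  refine iSup₂_le fun x hx => ?_
  rw [← f1.ofReal_infDist]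
  obtain ⟨g, hg, hgx⟩ := (f1.infDist L).exists_linearMap_le_and_eq x
  set z := (dotProductEquiv ℝ (Fin N)).symm g
  have hz : ∀ y, z ⬝ᵥ y = g y := fun y =>
    congrArg (· y) ((dotProductEquiv ℝ (Fin N)).apply_symm_apply g)
  have h1 : dualNorm f1 z ≤ 1 :=
    dualNorm_le fun y hy => (hz y).trans_le <| ((hg y).trans (f1.infDist_le_self L y)).trans hy
  have h0 : ENNReal.ofReal (dualNorm f0 z) ≤ deviation {x | f0 x ≤ 1} f1 L :=
    ofReal_dualNorm_le fun y hy => by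
      rw [hz]
      exact (ENNReal.ofReal_le_ofReal (hg y)).trans (f1.ofReal_infDist_le_deviation hy L)
  calc ENNReal.ofReal (f1.infDist L x) = ENNReal.ofReal (z ⬝ᵥ x) := by rw [hz, hgx]
    _ ≤ ENNReal.ofReal (dualNorm f1 z ^ θ * dualNorm f0 z ^ (1 - θ)) :=
        ENNReal.ofReal_le_ofReal ((dotProduct_le_dualNorm fθ z hθd hx).trans (hdual z))
    _ ≤ ENNReal.ofReal (dualNorm f0 z ^ (1 - θ)) :=
        ENNReal.ofReal_le_ofReal <| mul_le_of_le_one_left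
          (Real.rpow_nonneg (dualNorm_nonneg f0 z) _)
          (Real.rpow_le_one (dualNorm_nonneg f1 z) h1 hθ0)
    _ = ENNReal.ofReal (dualNorm f0 z) ^ (1 - θ) :=
        (ENNReal.ofReal_rpow_of_nonneg (dualNorm_nonneg f0 z) (by linarith)).symm
    _ ≤ deviation {x | f0 x ≤ 1} f1 L ^ (1 - θ) := by gcongr

theorem stmt_0_general {N : ℕ} (n : ℕ) (θ : ℝ) (hθ0 : 0 ≤ θ) (hθ1 : θ ≤ 1)
    (f0 f1 fθ : Seminorm ℝ (Fin N → ℝ))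
    (hθd : ∀ x, fθ x = 0 → x = 0)
    (hdual : ∀ x, dualNorm (⇑fθ) x ≤ (dualNorm (⇑f1) x) ^ θ * (dualNorm (⇑f0) x) ^ (1 - θ)) :
    kolWidth n {x | fθ x ≤ 1} (⇑f1) ≤ (kolWidth n {x | f0 x ≤ 1} (⇑f1)) ^ (1 - θ) := by
  have : Nonempty {L : Submodule ℝ (Fin N → ℝ) // Module.finrank ℝ L ≤ n} := ⟨⟨⊥, by simp⟩⟩
  rw [kolWidth_eq_iInf_deviation, kolWidth_eq_iInf_deviation, ENNReal.iInf_rpow _ (by linarith)]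
  exact iInf_mono fun L => deviation_le_rpow hθ0 hθ1 hθd hdual L

/-- Gluskin's interpolation theorem for Kolmogorov widths: if `0 ≤ θ ≤ 1` and the
dual norms satisfy `‖x‖_θ* ≤ (‖x‖₁*)^θ (‖x‖₀*)^{1−θ}`, then
`d_n(B_θ, X₁) ≤ d_n(B₀, X₁)^{1−θ}`. -/
theorem stmt_0 {N : ℕ} (n : ℕ) (θ : ℝ) (hθ0 : 0 ≤ θ) (hθ1 : θ ≤ 1)
    (f0 f1 fθ : Seminorm ℝ (Fin N → ℝ))
    (h0 : ∀ x, f0 x = 0 → x = 0) (h1 : ∀ x, f1 x = 0 → x = 0)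
    (hθd : ∀ x, fθ x = 0 → x = 0)
    (hdual : ∀ x, dualNorm (⇑fθ) x ≤ (dualNorm (⇑f1) x) ^ θ * (dualNorm (⇑f0) x) ^ (1 - θ)) :
    kolWidth n {x | fθ x ≤ 1} (⇑f1) ≤ (kolWidth n {x | f0 x ≤ 1} (⇑f1)) ^ (1 - θ) :=
  stmt_0_general n θ hθ0 hθ1 f0 f1 fθ hθd hdual
end

section
/- Let d ∈ ℕ, 0 ≤ ω ≤ 1, and for each j let 2 ≤ q_j < ∞ and define p̃_j by 1/p̃_j = (1−ω)/q_j + ω/2. Let p̃_j' and q_j' be the conjugate exponents. Then for all x ∈ ℝ^{k₁⋯k_d}, ‖x‖_{l_{p̃₁',…,p̃_d'}^{k₁,…,k_d}} ≤ ‖x‖_{l_{q₁',…,q_d'}^{k₁,…,k_d}}^{1−ω} · ‖x‖_{l_{2,…,2}^{k₁,…,k_d}}^{ω}. -/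
/-!
Interpolation holds for each `ℓ_p` norm: if `|x i| ≤ |y i|^(1-ω) |z i|^ω` and
`1/r = (1-ω)/a + ω/b`, Hölder's inequality with the exponents `a/(1-ω)` and `b/ω` gives
`‖x‖_r ≤ ‖y‖_a^(1-ω) ‖z‖_b^ω`. Applied to the slices, induction on the number of indices yields
the same inequality for mixed norms. Finally the relation between the exponents passes to
conjugates, since `1 - 1/p̃ = (1-ω)(1 - 1/q) + ω(1 - 1/2)`, and `2' = 2`.
-/

open scoped ENNReal NNReal BigOperators

/-- The `ℓ_p` norm on `Fin n → ℝ`, with `p = ∞` giving the max norm. -/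
noncomputable def lpN (p : ℝ≥0∞) {n : ℕ} (x : Fin n → ℝ) : ℝ :=
  if p = ∞ then ((Finset.univ.sup fun i => ‖x i‖₊ : ℝ≥0) : ℝ)
  else (∑ i, |x i| ^ p.toReal) ^ (1 / p.toReal)

/-- The mixed norm `l_{p₁,…,p_d}^{k₁,…,k_d}`, defined recursively: the `ℓ_{p_d}` norm
(over the last index) of the mixed norms of the slices. -/
noncomputable def mixedNorm : {d : ℕ} → (k : Fin d → ℕ) → (p : Fin d → ℝ≥0∞) →
    ((∀ i, Fin (k i)) → ℝ) → ℝ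
  | 0, _, _, x => |x (fun i => i.elim0)|
  | (_+1), k, p, x => lpN (p (Fin.last _)) fun j =>
      mixedNorm (fun i => k i.castSucc) (fun i => p i.castSucc)
        (fun v => x (Fin.snoc v j))

section LpNorm

variable {n : ℕ}

lemma lpN_nonneg (p : ℝ≥0∞) (x : Fin n → ℝ) : 0 ≤ lpN p x := by
  unfold lpN
  split_ifs <;> positivity

lemma lpN_ofReal {p : ℝ} (hp : 0 ≤ p) (x : Fin n → ℝ) :
    lpN (.ofReal p) x = (∑ i, |x i| ^ p) ^ (1 / p) := by
  rw [lpN, if_neg ENNReal.ofReal_ne_top, ENNReal.toReal_ofReal hp]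

lemma lpN_ofReal_mono {p : ℝ} (hp : 0 ≤ p) {x y : Fin n → ℝ} (h : ∀ i, |x i| ≤ |y i|) :
    lpN (.ofReal p) x ≤ lpN (.ofReal p) y := by
  rw [lpN_ofReal hp, lpN_ofReal hp]
  gcongr (∑ i, ?_ ^ p) ^ _ with i
  exact h i

lemma lpN_ofReal_mul_le {p q r : ℝ} (hpqr : p.HolderTriple q r) (x y : Fin n → ℝ) :
    lpN (.ofReal r) (fun i => x i * y i) ≤ lpN (.ofReal p) x * lpN (.ofReal q) y := by
  have := NNReal.coe_le_coe.2 <|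
    NNReal.Lr_le_Lp_mul_Lq Finset.univ (fun i => ‖x i‖₊) (fun i => ‖y i‖₊) hpqr
  push_cast at this
  simpa only [lpN_ofReal hpqr.pos'.le, lpN_ofReal hpqr.left_pos.le, lpN_ofReal hpqr.right_pos.le,
    Real.norm_eq_abs, abs_mul] using this

lemma lpN_ofReal_div_abs_rpow {a c : ℝ} (ha : 0 < a) (hc : 0 < c) (x : Fin n → ℝ) :
    lpN (.ofReal (a / c)) (fun i => |x i| ^ c) = lpN (.ofReal a) x ^ c := by
  have hS : 0 ≤ ∑ i, |x i| ^ a := by positivity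
  have hpow : ∀ i, |(|x i| ^ c)| ^ (a / c) = |x i| ^ a := fun i => by
    rw [abs_of_nonneg (by positivity), ← Real.rpow_mul (abs_nonneg _), mul_div_cancel₀ _ hc.ne']
  rw [lpN_ofReal (by positivity), lpN_ofReal ha.le, ← Real.rpow_mul hS]
  simp only [hpow]
  congr 1
  field_simp

lemma lpN_ofReal_le_rpow_mul_rpow {ω r a b : ℝ} (hω0 : 0 ≤ ω) (hω1 : ω ≤ 1) (ha : 0 < a)
    (hb : 0 < b) (hrab : r⁻¹ = (1 - ω) / a + ω / b) {x y z : Fin n → ℝ}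
    (hxyz : ∀ i, |x i| ≤ |y i| ^ (1 - ω) * |z i| ^ ω) :
    lpN (.ofReal r) x ≤ lpN (.ofReal a) y ^ (1 - ω) * lpN (.ofReal b) z ^ ω := by
  -- At `ω = 0` or `ω = 1` a Hölder exponent degenerates, but then the claim is monotonicity.
  obtain rfl | hω0 := hω0.eq_or_lt
  · obtain rfl : r = a := by simpa using hrab
    simpa using lpN_ofReal_mono ha.le (by simpa using hxyz)
  obtain rfl | hω1 := hω1.eq_or_lt
  · obtain rfl : r = b := by simpa using hrab
    simpa using lpN_ofReal_mono hb.le (by simpa using hxyz)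
  have hr : 0 ≤ r := inv_nonneg.mp (hrab ▸ by positivity)
  have hpqr : (a / (1 - ω)).HolderTriple (b / ω) r :=
    ⟨by rw [hrab, inv_div, inv_div, div_eq_mul_inv, div_eq_mul_inv], by bound, by positivity⟩
  calc lpN (.ofReal r) x
      ≤ lpN (.ofReal r) (fun i => |y i| ^ (1 - ω) * |z i| ^ ω) :=
        lpN_ofReal_mono hr fun i => (hxyz i).trans (le_abs_self _)
    _ ≤ lpN (.ofReal (a / (1 - ω))) (fun i => |y i| ^ (1 - ω)) *
          lpN (.ofReal (b / ω)) (fun i => |z i| ^ ω) := lpN_ofReal_mul_le hpqr _ _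
    _ = lpN (.ofReal a) y ^ (1 - ω) * lpN (.ofReal b) z ^ ω := by
        rw [lpN_ofReal_div_abs_rpow ha (by linarith), lpN_ofReal_div_abs_rpow hb hω0]

end LpNorm

lemma mixedNorm_nonneg {d : ℕ} (k : Fin d → ℕ) (p : Fin d → ℝ≥0∞) (x : (∀ i, Fin (k i)) → ℝ) :
    0 ≤ mixedNorm k p x := by
  cases d
  · exact abs_nonneg _
  · exact lpN_nonneg _ _

theorem mixedNorm_ofReal_le_rpow_mul_rpow {d : ℕ} (k : Fin d → ℕ) {ω : ℝ} (hω0 : 0 ≤ ω)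
    (hω1 : ω ≤ 1) {r a b : Fin d → ℝ} (ha : ∀ j, 0 < a j) (hb : ∀ j, 0 < b j)
    (hrab : ∀ j, (r j)⁻¹ = (1 - ω) / a j + ω / b j) (x : (∀ i, Fin (k i)) → ℝ) :
    mixedNorm k (fun j => .ofReal (r j)) x ≤
      mixedNorm k (fun j => .ofReal (a j)) x ^ (1 - ω) *
        mixedNorm k (fun j => .ofReal (b j)) x ^ ω := by
  induction d with
  | zero =>
    rw [mixedNorm, mixedNorm, mixedNorm, ← Real.rpow_add' (abs_nonneg _) (by simp),
      sub_add_cancel, Real.rpow_one]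
  | succ d ih =>
    rw [mixedNorm, mixedNorm, mixedNorm]
    refine lpN_ofReal_le_rpow_mul_rpow hω0 hω1 (ha _) (hb _) (hrab _) fun j => ?_
    simp only [abs_of_nonneg (mixedNorm_nonneg _ _ _)]
    exact ih _ (fun _ => ha _) (fun _ => hb _) (fun _ => hrab _) _

lemma Real.inv_conjExponent_eq_of_inv_eq {ω p q b : ℝ} (hp : 1 < p) (hq : 1 < q) (hb : 1 < b)
    (h : p⁻¹ = (1 - ω) / q + ω / b) :
    p.conjExponent⁻¹ = (1 - ω) / q.conjExponent + ω / b.conjExponent := by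
  rw [div_eq_mul_inv, div_eq_mul_inv, ← (Real.HolderConjugate.conjExponent hp).one_sub_inv,
    ← (Real.HolderConjugate.conjExponent hq).one_sub_inv,
    ← (Real.HolderConjugate.conjExponent hb).one_sub_inv, h]
  ring

/-- Hölder-type interpolation for mixed norms: with `1/p̃_j = (1−ω)/q_j + ω/2`,
`‖x‖_{p̃₁',…,p̃_d'} ≤ ‖x‖_{q₁',…,q_d'}^{1−ω} ‖x‖_{2,…,2}^{ω}`, where `r' = r/(r−1)`
denotes the conjugate exponent. -/
theorem stmt_3 {d : ℕ} (k : Fin d → ℕ) (ω : ℝ) (hω0 : 0 ≤ ω) (hω1 : ω ≤ 1)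
    (q : Fin d → ℝ) (hq : ∀ j, 2 ≤ q j)
    (ptilde : Fin d → ℝ) (hp : ∀ j, (ptilde j)⁻¹ = (1 - ω) / q j + ω / 2) :
    ∀ x : (∀ i, Fin (k i)) → ℝ,
      mixedNorm k (fun j => ENNReal.ofReal (ptilde j / (ptilde j - 1))) x ≤
        mixedNorm k (fun j => ENNReal.ofReal (q j / (q j - 1))) x ^ (1 - ω) *
          mixedNorm k (fun _ => (2 : ℝ≥0∞)) x ^ ω := by
  intro x
  have hq1 (j : Fin d) : 1 < q j := by linarith [hq j]
  have hp1 (j : Fin d) : 1 < ptilde j := by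
    have hqinv : (q j)⁻¹ ≤ 2⁻¹ := inv_anti₀ two_pos (hq j)
    have hqinv0 : 0 < (q j)⁻¹ := inv_pos.2 (by linarith [hq j])
    rw [← inv_inv (ptilde j), one_lt_inv_iff₀, hp j, div_eq_mul_inv]
    constructor <;> nlinarith [mul_nonneg hω0 (sub_nonneg.2 hqinv),
      mul_nonneg (sub_nonneg.2 hω1) (sub_nonneg.2 hqinv)]
  have h2 : (2 : ℝ).conjExponent = 2 := by norm_num [Real.conjExponent]
  have := mixedNorm_ofReal_le_rpow_mul_rpow k hω0 hω1 (b := fun _ => 2)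
    (fun j => (Real.HolderConjugate.conjExponent (hq1 j)).right_pos) (fun _ => two_pos)
    (fun j => h2 ▸ Real.inv_conjExponent_eq_of_inv_eq (hp1 j) (hq1 j) one_lt_two (hp j)) x
  simpa only [ENNReal.ofReal_ofNat, Real.conjExponent] using this
end

section
/- Let k₁,…,k_d ∈ ℕ, s_j ∈ {1,…,k_j}, n ∈ ℕ with n ≤ k₁⋯k_d. Then the Kolmogorov n-width of V_{s₁,…,s_d}^{k₁,…,k_d} in the Euclidean space ℝ^{k₁⋯k_d} (ℓ₂ norm) satisfies d_n(V, ℓ₂^{k₁⋯k_d}) ≥ (s₁⋯s_d)^{1/2} · √(1 − n/(k₁⋯k_d)). -/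
/-!
Translate the box indicator by elements of `∏ j, ℤ/k_j` and multiply it by coordinatewise signs.
Every vector of this family has squared norm `s₁⋯s_d`, and the family is a tight frame: averaging
over the signs kills all cross terms and averaging over the translations spreads the mass evenly, so
the squared inner products with any `u` sum to a fixed multiple of `‖u‖²`. Summing this over an
orthonormal basis of an `n`-dimensional subspace `L`, the squared norms of the projections onto `L`
average to `s₁⋯s_d · n / (k₁⋯k_d)`; a member of the family whose projection is at most average
has squared distance at least `s₁⋯s_d (1 - n/(k₁⋯k_d))` from `L`.
-/

open scoped ENNReal NNReal BigOperators

/-- The indicator vector `x̂(s̄)` of the box `∏_j {1,…,s_j}`. -/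
noncomputable def boxIndicator {d : ℕ} (k s : Fin d → ℕ) : (∀ i, Fin (k i)) → ℝ :=
  fun v => if ∀ i, (v i : ℕ) < s i then 1 else 0

/-- All signed coordinate-permuted copies `g(f)` of `f`. -/
def signedCopies {d : ℕ} (k : Fin d → ℕ) (f : (∀ i, Fin (k i)) → ℝ) :
    Set ((∀ i, Fin (k i)) → ℝ) :=
  {y | ∃ (σ : ∀ i, Equiv.Perm (Fin (k i))) (ε : ∀ i, Fin (k i) → ℝ),
    (∀ i j, ε i j = 1 ∨ ε i j = -1) ∧
    y = fun v => (∏ i, ε i (v i)) * f (fun i => (σ i) (v i))}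

open scoped RealInnerProductSpace

section TightFrame

variable {E : Type*} [NormedAddCommGroup E] [InnerProductSpace ℝ E]

theorem Submodule.norm_sq_sub_norm_sq_starProjection_le (K : Submodule ℝ E)
    [K.HasOrthogonalProjection] (z : E) {y : E} (hy : y ∈ K) :
    ‖z‖ ^ 2 - ‖K.starProjection z‖ ^ 2 ≤ ‖z - y‖ ^ 2 := by
  have pythagoras : ∀ w ∈ K,
      ‖z - w‖ ^ 2 = ‖z - K.starProjection z‖ ^ 2 + ‖K.starProjection z - w‖ ^ 2 := by
    intro w hw
    have hperp := K.starProjection_inner_eq_zero z _ (K.sub_mem (K.starProjection_apply_mem z) hw)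
    rw [← sub_add_sub_cancel z (K.starProjection z) w, sq, sq, sq,
      norm_add_sq_eq_norm_sq_add_norm_sq_real hperp]
  have h0 := pythagoras 0 K.zero_mem
  have hy' := pythagoras y hy
  rw [sub_zero, sub_zero] at h0
  nlinarith [sq_nonneg ‖K.starProjection z - y‖]

theorem OrthonormalBasis.norm_sq_starProjection_eq_sum {ι : Type*} [Fintype ι]
    {K : Submodule ℝ E} [K.HasOrthogonalProjection] (b : OrthonormalBasis ι ℝ K) (z : E) :
    ‖K.starProjection z‖ ^ 2 = ∑ j, ⟪(b j : E), z⟫ ^ 2 := by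
  rw [Submodule.starProjection_apply, Submodule.norm_coe,
    ← b.sum_sq_norm_inner_right (K.orthogonalProjectionOnto z)]
  simp only [Submodule.inner_orthogonalProjectionOnto_eq_of_mem_left, Real.norm_eq_abs, sq_abs]

theorem exists_forall_mem_le_norm_sub_sq_of_sum_inner_sq {P : Type*} [Fintype P] [Nonempty P]
    (z : P → E) {A R : ℝ} (hframe : ∀ u, ∑ p, ⟪z p, u⟫ ^ 2 = A * ‖u‖ ^ 2)
    (hnorm : ∀ p, ‖z p‖ ^ 2 = R) (K : Submodule ℝ E) [FiniteDimensional ℝ K] :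
    ∃ p, ∀ y ∈ K, R - A * Module.finrank ℝ K / Fintype.card P ≤ ‖z p - y‖ ^ 2 := by
  let b := stdOrthonormalBasis ℝ K
  have htotal : ∑ p, ‖K.starProjection (z p)‖ ^ 2 = A * Module.finrank ℝ K := by
    have hcomm : ∀ j p, ⟪(b j : E), z p⟫ = ⟪z p, b j⟫ := fun _ _ => real_inner_comm _ _
    simp only [b.norm_sq_starProjection_eq_sum, hcomm]
    rw [Finset.sum_comm]
    simp [hframe, Submodule.norm_coe, b.orthonormal.1, mul_comm]
  obtain ⟨p, -, hp⟩ := Finset.exists_le_of_sum_le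
    (f := fun p => ‖K.starProjection (z p)‖ ^ 2)
    (g := fun _ => A * Module.finrank ℝ K / Fintype.card P) Finset.univ_nonempty
    (by simp [htotal, mul_div_cancel₀])
  refine ⟨p, fun y hy => ?_⟩
  have := K.norm_sq_sub_norm_sq_starProjection_le (z p) hy
  rw [hnorm] at this
  linarith

end TightFrame

section SignedShifts

variable {ι : Type*} [Fintype ι] {κ : ι → Type*}

def signProd (ε : ∀ i, κ i → ℤˣ) (v : ∀ i, κ i) : ℤˣ := ∏ i, ε i (v i)

theorem signProd_mul (ε ε' : ∀ i, κ i → ℤˣ) (v : ∀ i, κ i) :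
    signProd (ε * ε') v = signProd ε v * signProd ε' v :=
  Finset.prod_mul_distrib

theorem signProd_mulSingle_mulSingle [DecidableEq ι] [∀ i, DecidableEq (κ i)] (i : ι) (a : κ i)
    (v : ∀ i, κ i) :
    signProd (Pi.mulSingle i (Pi.mulSingle a (-1))) v = if v i = a then -1 else 1 := by
  rw [signProd, Fintype.prod_eq_single i fun j hj => by simp [Pi.mulSingle_eq_of_ne hj]]
  split_ifs with h <;> simp [h]

theorem sum_signProd_mul_signProd [DecidableEq ι] [∀ i, Fintype (κ i)] [∀ i, DecidableEq (κ i)]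
    (v w : ∀ i, κ i) :
    ∑ ε : ∀ i, κ i → ℤˣ, ((signProd ε v * signProd ε w : ℤˣ) : ℤ) =
      if v = w then Fintype.card (∀ i, κ i → ℤˣ) else 0 := by
  split_ifs with hvw
  · simp [hvw, Int.units_mul_self]
  obtain ⟨i, hi⟩ := Function.ne_iff.mp hvw
  -- flipping the single sign `ε i (v i)` negates every summand
  set flip : ∀ i, κ i → ℤˣ := Pi.mulSingle i (Pi.mulSingle (v i) (-1))
  have hneg : ∀ ε, ((signProd (flip * ε) v * signProd (flip * ε) w : ℤˣ) : ℤ) =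
      -((signProd ε v * signProd ε w : ℤˣ) : ℤ) := by
    intro ε
    simp [flip, signProd_mul, signProd_mulSingle_mulSingle, Ne.symm hi]
  have := Equiv.sum_comp (Equiv.mulLeft flip) fun ε => ((signProd ε v * signProd ε w : ℤˣ) : ℤ)
  simp only [Equiv.coe_mulLeft, hneg, Finset.sum_neg_distrib] at this
  omega

theorem sum_sq_sum_signProd_mul [DecidableEq ι] [∀ i, Fintype (κ i)] [∀ i, DecidableEq (κ i)]
    (g : (∀ i, κ i) → ℝ) :
    ∑ ε : ∀ i, κ i → ℤˣ, (∑ v, ((signProd ε v : ℤ) : ℝ) * g v) ^ 2 =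
      Fintype.card (∀ i, κ i → ℤˣ) * ∑ v, g v ^ 2 := by
  have horth : ∀ v w, ∑ ε : ∀ i, κ i → ℤˣ, ((signProd ε v : ℤ) : ℝ) * (signProd ε w : ℤ) =
      if v = w then (Fintype.card (∀ i, κ i → ℤˣ) : ℝ) else 0 := by
    intro v w
    have := congrArg (Int.cast : ℤ → ℝ) (sum_signProd_mul_signProd v w)
    push_cast at this
    rw [this]
  calc ∑ ε : ∀ i, κ i → ℤˣ, (∑ v, ((signProd ε v : ℤ) : ℝ) * g v) ^ 2
      = ∑ v, ∑ w, (∑ ε : ∀ i, κ i → ℤˣ, ((signProd ε v : ℤ) : ℝ) * (signProd ε w : ℤ)) *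
          (g v * g w) := by
        simp only [sq, Finset.sum_mul_sum (s := Finset.univ) (t := Finset.univ), Finset.sum_mul]
        rw [Finset.sum_comm]
        refine Finset.sum_congr rfl fun v _ => ?_
        rw [Finset.sum_comm]
        exact Finset.sum_congr rfl fun w _ => Finset.sum_congr rfl fun ε _ => by ring
    _ = Fintype.card (∀ i, κ i → ℤˣ) * ∑ v, g v ^ 2 := by
        simp [horth, Finset.mul_sum, sq]

variable [∀ i, AddGroup (κ i)]

def signedShift (f : (∀ i, κ i) → ℝ) (c : ∀ i, κ i) (ε : ∀ i, κ i → ℤˣ) : (∀ i, κ i) → ℝ :=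
  fun v => (signProd ε v : ℤ) * f (c + v)

theorem sum_signedShift_sq [DecidableEq ι] [∀ i, Fintype (κ i)] (f : (∀ i, κ i) → ℝ)
    (c : ∀ i, κ i) (ε : ∀ i, κ i → ℤˣ) : ∑ v, signedShift f c ε v ^ 2 = ∑ v, f v ^ 2 := by
  have hsign : ∀ v, ((signProd ε v : ℤ) : ℝ) ^ 2 = 1 := fun v => by
    rw [← Int.cast_pow, ← Units.val_pow_eq_pow_val, Int.units_sq]; simp
  simp only [signedShift, mul_pow, hsign, one_mul]
  exact Equiv.sum_comp (Equiv.addLeft c) fun v => f v ^ 2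

theorem sum_sum_sq_sum_signedShift_mul [DecidableEq ι] [∀ i, Fintype (κ i)]
    [∀ i, DecidableEq (κ i)] (f u : (∀ i, κ i) → ℝ) :
    ∑ c, ∑ ε, (∑ v, signedShift f c ε v * u v) ^ 2 =
      Fintype.card (∀ i, κ i → ℤˣ) * (∑ v, f v ^ 2) * ∑ v, u v ^ 2 := by
  have hshift : ∀ v, ∑ c, f (c + v) ^ 2 = ∑ c, f c ^ 2 := fun v =>
    Equiv.sum_comp (Equiv.addRight v) fun c => f c ^ 2
  calc ∑ c, ∑ ε, (∑ v, signedShift f c ε v * u v) ^ 2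
      = ∑ c, Fintype.card (∀ i, κ i → ℤˣ) * ∑ v, (f (c + v) * u v) ^ 2 := by
        refine Finset.sum_congr rfl fun c _ => ?_
        simp only [signedShift, mul_assoc, sum_sq_sum_signProd_mul]
    _ = Fintype.card (∀ i, κ i → ℤˣ) * (∑ v, f v ^ 2) * ∑ v, u v ^ 2 := by
        simp only [mul_pow, ← Finset.mul_sum, ← Finset.sum_mul, Finset.sum_comm (γ := ∀ i, κ i),
          hshift]
        ring

theorem exists_forall_mem_le_sum_sq_signedShift_sub [DecidableEq ι] [∀ i, Fintype (κ i)]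
    [∀ i, DecidableEq (κ i)] (f : (∀ i, κ i) → ℝ) (L : Submodule ℝ ((∀ i, κ i) → ℝ)) :
    ∃ c ε, ∀ y ∈ L, (∑ v, f v ^ 2) * (1 - Module.finrank ℝ L / Fintype.card (∀ i, κ i)) ≤
      ∑ v, (signedShift f c ε v - y v) ^ 2 := by
  let e := (WithLp.linearEquiv 2 ℝ ((∀ i, κ i) → ℝ)).symm
  have hnorm : ∀ x, ‖e x‖ ^ 2 = ∑ v, x v ^ 2 := fun x => by
    simp [e, EuclideanSpace.norm_sq_eq]
  have hinner : ∀ x u, ⟪e x, u⟫ = ∑ v, x v * u.ofLp v := fun x u => by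
    simp [e, PiLp.inner_apply, mul_comm]
  obtain ⟨⟨c, ε⟩, hfar⟩ := exists_forall_mem_le_norm_sub_sq_of_sum_inner_sq
    (fun p : (∀ i, κ i) × (∀ i, κ i → ℤˣ) => e (signedShift f p.1 p.2))
    (A := Fintype.card (∀ i, κ i → ℤˣ) * ∑ v, f v ^ 2)
    (fun u => by
      simp only [hinner, Fintype.sum_prod_type, sum_sum_sq_sum_signedShift_mul,
        EuclideanSpace.norm_sq_eq]
      simp [mul_assoc])
    (fun p => by rw [hnorm, sum_signedShift_sq]) (L.map e.toLinearMap)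
  refine ⟨c, ε, fun y hy => ?_⟩
  have := hfar (e y) (Submodule.mem_map_of_mem hy)
  rw [LinearEquiv.finrank_map_eq, ← map_sub, hnorm, Fintype.card_prod, Nat.cast_mul] at this
  have hcard : (Fintype.card (∀ i, κ i → ℤˣ) : ℝ) ≠ 0 := by positivity
  convert this using 1
  · field_simp
  · rfl

end SignedShifts

theorem signedShift_mem_signedCopies {d : ℕ} (k : Fin d → ℕ) [∀ i, NeZero (k i)]
    (f : (∀ i, Fin (k i)) → ℝ) (c : ∀ i, Fin (k i)) (ε : ∀ i, Fin (k i) → ℤˣ) :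
    signedShift f c ε ∈ signedCopies k f := by
  refine ⟨fun i => Equiv.addLeft (c i), fun i j => ((ε i j : ℤ) : ℝ), fun i j => ?_, ?_⟩
  · rcases Int.units_eq_one_or (ε i j) with h | h <;> simp [h]
  · funext v
    simp only [signedShift, signProd, Units.coe_prod, Int.cast_prod, Equiv.coe_addLeft]
    rfl

theorem sum_boxIndicator_sq {d : ℕ} (k s : Fin d → ℕ) (hsk : ∀ j, s j ≤ k j) :
    ∑ v, boxIndicator k s v ^ 2 = ∏ j, (s j : ℝ) := by
  have hbox : ∀ v, boxIndicator k s v ^ 2 = ∏ j, if (v j : ℕ) < s j then (1 : ℝ) else 0 := by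
    intro v
    rw [boxIndicator, Finset.prod_boole]
    split_ifs <;> simp_all
  rw [Finset.sum_congr rfl fun v _ => hbox v,
    ← Fintype.prod_sum fun j (x : Fin (k j)) => if (x : ℕ) < s j then (1 : ℝ) else 0]
  simp only [Finset.sum_boole, Fin.card_filter_val_lt, min_eq_right (hsk _)]

theorem ofReal_le_kolWidth {V : Type*} [AddCommGroup V] [Module ℝ V] {n : ℕ} {M : Set V}
    {nrm : V → ℝ} {r : ℝ}
    (h : ∀ L : Submodule ℝ V, Module.finrank ℝ L ≤ n → ∃ x ∈ M, ∀ y ∈ L, r ≤ nrm (x - y)) :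
    ENNReal.ofReal r ≤ kolWidth n M nrm := by
  refine le_iInf fun L => ?_
  obtain ⟨x, hx, hfar⟩ := h L.1 L.2
  exact le_iSup₂_of_le x hx <| le_iInf₂ fun y hy => ENNReal.ofReal_le_ofReal (hfar y hy)

theorem stmt_9_general {d : ℕ} (k s : Fin d → ℕ) (hs1 : ∀ j, 1 ≤ s j) (hsk : ∀ j, s j ≤ k j)
    (n : ℕ) :
    ENNReal.ofReal ((∏ j, (s j : ℝ)) ^ ((1 : ℝ) / 2) *
        Real.sqrt (1 - (n : ℝ) / ∏ j, (k j : ℝ))) ≤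
      kolWidth n (convexHull ℝ (signedCopies k (boxIndicator k s)))
        (fun x => Real.sqrt (∑ v, x v ^ 2)) := by
  have : ∀ i, NeZero (k i) := fun i => ⟨by have := hs1 i; have := hsk i; omega⟩
  refine ofReal_le_kolWidth fun L hL => ?_
  obtain ⟨c, ε, hfar⟩ := exists_forall_mem_le_sum_sq_signedShift_sub (boxIndicator k s) L
  refine ⟨signedShift (boxIndicator k s) c ε,
    subset_convexHull ℝ _ (signedShift_mem_signedCopies k _ c ε), fun y hy => ?_⟩
  rw [← Real.sqrt_eq_rpow, ← Real.sqrt_mul (by positivity)]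
  refine Real.sqrt_le_sqrt ?_
  calc (∏ j, (s j : ℝ)) * (1 - n / ∏ j, (k j : ℝ))
      ≤ (∏ j, (s j : ℝ)) * (1 - Module.finrank ℝ L / ∏ j, (k j : ℝ)) := by
        gcongr
    _ = (∑ v, boxIndicator k s v ^ 2) *
          (1 - Module.finrank ℝ L / Fintype.card (∀ i, Fin (k i))) := by
        simp [sum_boxIndicator_sq k s hsk]
    _ ≤ ∑ v, (signedShift (boxIndicator k s) c ε v - y v) ^ 2 := hfar y hy

/-- Lower bound for the Kolmogorov width of `V_{s̄}^{k̄}` in the Euclidean norm: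
`d_n(V, ℓ₂) ≥ (s₁⋯s_d)^{1/2} √(1 − n/(k₁⋯k_d))`. -/
theorem stmt_9 {d : ℕ} (k s : Fin d → ℕ) (hs1 : ∀ j, 1 ≤ s j) (hsk : ∀ j, s j ≤ k j)
    (n : ℕ) (hn : n ≤ ∏ j, k j) :
    ENNReal.ofReal ((∏ j, (s j : ℝ)) ^ ((1 : ℝ) / 2) *
        Real.sqrt (1 - (n : ℝ) / ∏ j, (k j : ℝ))) ≤
      kolWidth n (convexHull ℝ (signedCopies k (boxIndicator k s)))
        (fun x => Real.sqrt (∑ v, x v ^ 2)) :=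
  stmt_9_general k s hs1 hsk n
end

section
/- Let m, n ∈ ℕ and h > 0 with C₁ ≤ mh ≤ C₂ for fixed constants 0 < C₁ ≤ C₂. Then there is a constant C depending only on C₁, C₂ such that for all x ∈ ℝ, ∑_{0 ≤ l ≤ 2π/h} K_m(x − lh) ≤ C·m, where K_m is the Fejér kernel of order m. -/
open scoped BigOperators
open Real Classical

/-- The Fejér kernel `K_m(x) = sin²((m+1)x/2)/((m+1) sin²(x/2))`, with value `m+1` at the
multiples of `2π`. -/
noncomputable def fejerK (m : ℕ) (x : ℝ) : ℝ :=
  if ∃ k : ℤ, x = 2 * π * k then m + 1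
  else Real.sin ((m + 1) * x / 2) ^ 2 / ((m + 1) * Real.sin (x / 2) ^ 2)

/-!
The Fejér kernel satisfies `K_m ≤ m + 1` everywhere and `K_m t ≤ π² / ((m + 1) t²)` on
`[-π, π]`. Reduce each node `x - l h` modulo `2π` into `[-π, π]`; as the nodes span at most one
period, only two shifts `2π q` occur. For a fixed shift the reduced nodes form an arithmetic
progression of step `h`, so each band `j h ≤ |t| < (j + 1) h` contains at most two of them.
Summing the band bounds gives `4 (m + 1) + 8 π² / ((m + 1) h²)`, which is `O(m)` once `m h ≥ C₁`.
-/

open Finset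

lemma abs_sin_nat_mul_le (n : ℕ) (t : ℝ) : |sin (n * t)| ≤ n * |sin t| := by
  induction n with
  | zero => simp
  | succ n ih =>
    calc |sin ((n + 1 : ℕ) * t)| = |sin (n * t) * cos t + cos (n * t) * sin t| := by
          rw [Nat.cast_succ, add_one_mul, sin_add]
      _ ≤ |sin (n * t)| * |cos t| + |cos (n * t)| * |sin t| := by
          rw [← abs_mul, ← abs_mul]; exact abs_add_le _ _
      _ ≤ |sin (n * t)| * 1 + 1 * |sin t| := by
          gcongr
          · exact abs_cos_le_one t
          · exact abs_cos_le_one _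
      _ ≤ (n + 1 : ℕ) * |sin t| := by push_cast; linarith

lemma fejerK_le_add_one (m : ℕ) (x : ℝ) : fejerK m x ≤ m + 1 := by
  unfold fejerK
  split_ifs with hx
  · rfl
  have hsin : sin (x / 2) ≠ 0 := fun h0 => by
    obtain ⟨n, hn⟩ := sin_eq_zero_iff.mp h0
    exact hx ⟨n, by linear_combination (-2 : ℝ) * hn⟩
  have key : sin ((m + 1) * x / 2) ^ 2 ≤ ((m + 1) * sin (x / 2)) ^ 2 := by
    rw [← sq_abs, ← sq_abs ((m + 1 : ℝ) * sin (x / 2)), abs_mul,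
      abs_of_pos (by positivity : (0 : ℝ) < m + 1)]
    have := abs_sin_nat_mul_le (m + 1) (x / 2)
    push_cast at this
    rw [mul_div_assoc]
    gcongr
  rw [div_le_iff₀ (by positivity)]
  linear_combination key

lemma fejerK_le_pi_sq_div (m : ℕ) {x : ℝ} (h0 : x ≠ 0) (hx : |x| ≤ π) :
    fejerK m x ≤ π ^ 2 / ((m + 1) * x ^ 2) := by
  have jordan : |x| / π ≤ |sin (x / 2)| := by
    calc |x| / π = 2 / π * |x / 2| := by rw [abs_div, abs_two]; ring
      _ ≤ |sin (x / 2)| := mul_abs_le_abs_sin (by rw [abs_div, abs_two]; linarith)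
  have hx2k : ¬ ∃ k : ℤ, x = 2 * π * k := by
    rintro ⟨k, rfl⟩
    have hk : k ≠ 0 := by rintro rfl; simp at h0
    have : (1 : ℝ) ≤ |(k : ℝ)| := by exact_mod_cast Int.one_le_abs hk
    rw [abs_mul, abs_of_pos (by positivity : (0 : ℝ) < 2 * π)] at hx
    nlinarith [pi_pos]
  unfold fejerK
  rw [if_neg hx2k]
  calc sin ((m + 1) * x / 2) ^ 2 / ((m + 1) * sin (x / 2) ^ 2)
      ≤ 1 / ((m + 1) * (|x| / π) ^ 2) := by
        rw [← sq_abs (sin (x / 2))]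
        gcongr
        exact sin_sq_le_one _
    _ = π ^ 2 / ((m + 1) * x ^ 2) := by
        rw [div_pow, sq_abs]; field_simp

lemma fejerK_periodic (m : ℕ) : Function.Periodic (fejerK m) (2 * π) := by
  intro x
  have hmul : (∃ k : ℤ, x + 2 * π = 2 * π * k) ↔ ∃ k : ℤ, x = 2 * π * k :=
    ⟨fun ⟨k, hk⟩ => ⟨k - 1, by push_cast; linarith⟩,
      fun ⟨k, hk⟩ => ⟨k + 1, by push_cast; linarith⟩⟩
  unfold fejerK
  simp only [hmul]
  split_ifs
  · rfl
  have h1 : (m + 1 : ℝ) * (x + 2 * π) / 2 = (m + 1) * x / 2 + (m + 1 : ℕ) * π := by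
    push_cast; ring
  have h2 : (x + 2 * π) / 2 = x / 2 + π := by ring
  rw [h1, h2, sin_add_nat_mul_pi, sin_add_pi, mul_pow, ← pow_mul,
    (even_two.mul_left (m + 1)).neg_one_pow, neg_sq, one_mul]

lemma round_mono {α : Type*} [Field α] [LinearOrder α] [IsStrictOrderedRing α] [FloorRing α] :
    Monotone (round : α → ℤ) := fun a b hab => by
  simp only [round_eq]
  exact Int.floor_mono (by linarith)

lemma eq_of_natFloor_abs_sub_eq {c : ℝ} {l l' : ℕ} (hside : (l : ℝ) ≤ c ↔ (l' : ℝ) ≤ c)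
    (h : ⌊|c - l|⌋₊ = ⌊|c - l'|⌋₊) : l = l' := by
  have hfloor : ⌊|c - l|⌋ = ⌊|c - l'|⌋ := by
    rw [← Int.natCast_floor_eq_floor (abs_nonneg _), ← Int.natCast_floor_eq_floor (abs_nonneg _), h]
  have hlt := abs_sub_lt_iff.1 (Int.abs_sub_lt_one_of_floor_eq_floor hfloor)
  have hclose : (l' : ℝ) < l + 1 ∧ (l : ℝ) < l' + 1 := by
    by_cases hl : (l : ℝ) ≤ c
    · rw [abs_of_nonneg (sub_nonneg.2 hl), abs_of_nonneg (sub_nonneg.2 (hside.1 hl))] at hlt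
      constructor <;> linarith [hlt.1, hlt.2]
    · have hl' : ¬ (l' : ℝ) ≤ c := hside.not.1 hl
      push Not at hl hl'
      rw [abs_of_neg (sub_neg.2 hl), abs_of_neg (sub_neg.2 hl')] at hlt
      constructor <;> linarith [hlt.1, hlt.2]
  have h₁ : l' < l + 1 := by exact_mod_cast hclose.1
  have h₂ : l < l' + 1 := by exact_mod_cast hclose.2
  omega

lemma sum_comp_natFloor_abs_sub_le {F : ℕ → ℝ} (hF : ∀ j, 0 ≤ F j) (c : ℝ) {s : Finset ℕ}
    {N : ℕ} (hs : ∀ l ∈ s, ⌊|c - l|⌋₊ ≤ N) :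
    ∑ l ∈ s, F ⌊|c - l|⌋₊ ≤ 2 * ∑ j ∈ range (N + 1), F j := by
  have one_side : ∀ p : ℕ → Prop, [DecidablePred p] →
      (∀ l l', p l → p l' → ((l : ℝ) ≤ c ↔ (l' : ℝ) ≤ c)) →
      ∑ l ∈ s.filter p, F ⌊|c - l|⌋₊ ≤ ∑ j ∈ range (N + 1), F j := by
    intro p _ hp
    rw [← sum_image fun l hl l' hl' => eq_of_natFloor_abs_sub_eq
      (hp l l' (mem_filter.1 hl).2 (mem_filter.1 hl').2)]
    refine sum_le_sum_of_subset_of_nonneg (fun j hj => ?_) fun j _ _ => hF j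
    obtain ⟨l, hl, rfl⟩ := mem_image.1 hj
    exact mem_range.2 (Nat.lt_succ_of_le (hs l (mem_filter.1 hl).1))
  rw [← sum_filter_add_sum_filter_not s (fun l : ℕ => (l : ℝ) ≤ c), two_mul]
  exact add_le_add (one_side _ fun l l' hl hl' => iff_of_true hl hl')
    (one_side _ fun l l' hl hl' => iff_of_false hl hl')

/-- Bound for `fejerK m t` on the band `⌊|t| / h⌋₊ = j`. -/
noncomputable def fejerBandBound (m : ℕ) (h : ℝ) (j : ℕ) : ℝ :=
  if j = 0 then m + 1 else π ^ 2 / ((m + 1) * (j * h) ^ 2)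

lemma fejerBandBound_nonneg (m : ℕ) (h : ℝ) (j : ℕ) : 0 ≤ fejerBandBound m h j := by
  unfold fejerBandBound; split_ifs <;> positivity

lemma fejerK_le_fejerBandBound (m : ℕ) {h t : ℝ} (hh : 0 < h) (ht : |t| ≤ π) :
    fejerK m t ≤ fejerBandBound m h ⌊|t| / h⌋₊ := by
  unfold fejerBandBound
  split_ifs with hj
  · exact fejerK_le_add_one m t
  have hjt : ⌊|t| / h⌋₊ * h ≤ |t| := (le_div_iff₀ hh).1 (Nat.floor_le (by positivity))
  have hj0 : (0 : ℝ) < ⌊|t| / h⌋₊ * h := mul_pos (by exact_mod_cast Nat.pos_of_ne_zero hj) hh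
  have ht0 : t ≠ 0 := by rintro rfl; simp at hj
  calc fejerK m t ≤ π ^ 2 / ((m + 1) * t ^ 2) := fejerK_le_pi_sq_div m ht0 ht
    _ ≤ _ := by rw [← sq_abs t]; gcongr

lemma sum_fejerBandBound_le (m N : ℕ) (h : ℝ) :
    ∑ j ∈ range (N + 1), fejerBandBound m h j ≤ m + 1 + 2 * π ^ 2 / ((m + 1) * h ^ 2) := by
  rw [range_eq_Ico, sum_eq_sum_Ico_succ_bot N.succ_pos, Ico_add_one_left_eq_Ioo]
  have htail : ∑ j ∈ Ioo 0 (N + 1), fejerBandBound m h j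
      = π ^ 2 / ((m + 1) * h ^ 2) * ∑ j ∈ Ioo 0 (N + 1), ((j : ℝ) ^ 2)⁻¹ := by
    rw [mul_sum]
    refine sum_congr rfl fun j hj => ?_
    rw [fejerBandBound, if_neg (mem_Ioo.1 hj).1.ne', mul_pow]
    field_simp
  have hsum : ∑ j ∈ Ioo 0 (N + 1), ((j : ℝ) ^ 2)⁻¹ ≤ 2 := by
    simpa using sum_Ioo_inv_sq_le (α := ℝ) 0 (N + 1)
  rw [htail, fejerBandBound, if_pos rfl]
  calc (m + 1 : ℝ) + π ^ 2 / ((m + 1) * h ^ 2) * ∑ j ∈ Ioo 0 (N + 1), ((j : ℝ) ^ 2)⁻¹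
      ≤ m + 1 + π ^ 2 / ((m + 1) * h ^ 2) * 2 := by gcongr
    _ = m + 1 + 2 * π ^ 2 / ((m + 1) * h ^ 2) := by ring

lemma sum_fejerK_le_of_abs_le_pi (m : ℕ) {h : ℝ} (hh : 0 < h) (y : ℝ) {s : Finset ℕ}
    (hs : ∀ l ∈ s, |y - l * h| ≤ π) :
    ∑ l ∈ s, fejerK m (y - l * h) ≤ 2 * (m + 1 + 2 * π ^ 2 / ((m + 1) * h ^ 2)) := by
  have hscale : ∀ l : ℕ, |y - l * h| / h = |y / h - l| := fun l => by
    rw [← abs_of_pos hh, ← abs_div, abs_of_pos hh, sub_div, mul_div_cancel_right₀ _ hh.ne']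
  calc ∑ l ∈ s, fejerK m (y - l * h)
      ≤ ∑ l ∈ s, fejerBandBound m h ⌊|y / h - l|⌋₊ :=
        sum_le_sum fun l hl => hscale l ▸ fejerK_le_fejerBandBound m hh (hs l hl)
    _ ≤ 2 * ∑ j ∈ range (⌊π / h⌋₊ + 1), fejerBandBound m h j :=
        sum_comp_natFloor_abs_sub_le (fejerBandBound_nonneg m h) _ fun l hl => by
          rw [← hscale]; exact Nat.floor_mono (by gcongr; exact hs l hl)
    _ ≤ _ := by gcongr; exact sum_fejerBandBound_le m _ h

lemma sum_fejerK_sub_nat_mul_le (m : ℕ) {h : ℝ} (hh : 0 < h) (x : ℝ) {L : ℕ}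
    (hL : L * h ≤ 2 * π) :
    ∑ l ∈ range (L + 1), fejerK m (x - l * h) ≤ 4 * (m + 1 + 2 * π ^ 2 / ((m + 1) * h ^ 2)) := by
  set k : ℕ → ℤ := fun l => round ((x - l * h) / (2 * π))
  set k₀ := round (x / (2 * π))
  have hk : ∀ l ∈ range (L + 1), k l ∈ Icc (k₀ - 1) k₀ := fun l hl => by
    have hlL : (l : ℝ) ≤ L := by exact_mod_cast Nat.lt_succ_iff.1 (mem_range.1 hl)
    have hlh : (l : ℝ) * h ≤ 2 * π := le_trans (by gcongr) hL
    rw [mem_Icc, ← round_sub_one]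
    constructor <;> apply round_mono
    · rw [le_div_iff₀ (by positivity), sub_mul, div_mul_cancel₀ _ (by positivity)]
      linarith
    · gcongr; nlinarith [mul_nonneg (Nat.cast_nonneg l) hh.le]
  have hred : ∀ l : ℕ, |x - k l * (2 * π) - l * h| ≤ π := fun l => by
    have hround := abs_sub_round ((x - l * h) / (2 * π))
    have e : x - k l * (2 * π) - l * h = 2 * π * ((x - l * h) / (2 * π) - k l) := by
      field_simp; ring
    rw [e, abs_mul, abs_of_pos (by positivity)]
    nlinarith [pi_pos]
  calc ∑ l ∈ range (L + 1), fejerK m (x - l * h)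
      = ∑ q ∈ Icc (k₀ - 1) k₀, ∑ l ∈ (range (L + 1)).filter (k · = q),
          fejerK m (x - q * (2 * π) - l * h) := by
        rw [← sum_fiberwise_of_maps_to hk]
        refine sum_congr rfl fun q _ => sum_congr rfl fun l _ => ?_
        rw [sub_right_comm, (fejerK_periodic m).sub_int_mul_eq]
    _ ≤ ∑ q ∈ Icc (k₀ - 1) k₀, 2 * (m + 1 + 2 * π ^ 2 / ((m + 1) * h ^ 2)) :=
        sum_le_sum fun q _ => sum_fejerK_le_of_abs_le_pi m hh _ fun l hl => by
          rw [← (mem_filter.1 hl).2]; exact hred l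
    _ = 4 * (m + 1 + 2 * π ^ 2 / ((m + 1) * h ^ 2)) := by
        rw [sum_const, Int.card_Icc, show k₀ + 1 - (k₀ - 1) = (2 : ℕ) by push_cast; ring,
          Int.toNat_natCast, nsmul_eq_mul]
        norm_num
        ring

theorem stmt_15_general (C₁ C₂ : ℝ) (hC₁ : 0 < C₁) :
    ∃ C > (0 : ℝ), ∀ (m : ℕ) (h : ℝ), 0 < h → C₁ ≤ m * h → m * h ≤ C₂ →
      ∀ x : ℝ, ∑ l ∈ Finset.range (Nat.floor (2 * π / h) + 1),
        fejerK m (x - l * h) ≤ C * m := by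
  refine ⟨8 + 8 * π ^ 2 / C₁ ^ 2, by positivity, fun m h hh hmh _ x => ?_⟩
  have hm : (1 : ℝ) ≤ m := Nat.one_le_cast.2 <| Nat.pos_of_ne_zero <| by
    rintro rfl; simp at hmh; linarith
  have hL : (⌊2 * π / h⌋₊ : ℝ) * h ≤ 2 * π := (le_div_iff₀ hh).1 (Nat.floor_le (by positivity))
  have hdecay : π ^ 2 / ((m + 1) * h ^ 2) ≤ π ^ 2 / C₁ ^ 2 * m := by
    rw [div_mul_eq_mul_div, div_le_div_iff₀ (by positivity) (by positivity)]
    calc π ^ 2 * C₁ ^ 2 ≤ π ^ 2 * (m * h) ^ 2 := by gcongr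
      _ ≤ π ^ 2 * m * ((m + 1) * h ^ 2) := by
        linear_combination mul_nonneg (mul_nonneg (sq_nonneg π) (Nat.cast_nonneg m)) (sq_nonneg h)
  calc _ ≤ 4 * (m + 1 + 2 * π ^ 2 / ((m + 1) * h ^ 2)) := sum_fejerK_sub_nat_mul_le m hh x hL
    _ = 4 * (m + 1) + 8 * (π ^ 2 / ((m + 1) * h ^ 2)) := by ring
    _ ≤ 8 * m + 8 * (π ^ 2 / C₁ ^ 2 * m) := by linarith
    _ = (8 + 8 * π ^ 2 / C₁ ^ 2) * m := by ring

/-- If `C₁ ≤ mh ≤ C₂`, then `∑_{0 ≤ l ≤ 2π/h} K_m(x − lh) ≤ C m` for a constant `C`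
depending only on `C₁, C₂`. -/
theorem stmt_15 (C₁ C₂ : ℝ) (hC₁ : 0 < C₁) (hC : C₁ ≤ C₂) :
    ∃ C > (0 : ℝ), ∀ (m : ℕ) (h : ℝ), 0 < h → C₁ ≤ m * h → m * h ≤ C₂ →
      ∀ x : ℝ, ∑ l ∈ Finset.range (Nat.floor (2 * π / h) + 1),
        fejerK m (x - l * h) ≤ C * m :=
  stmt_15_general C₁ C₂ hC₁
end

section
/- Let d ∈ ℕ, k₁,…,k_d, m ∈ ℕ, and 1 ≤ q_j < ∞. Let G be the group of signed-permutation operators acting on ℝ^{k₁⋯k_d}. For each g ∈ G, let y_g ∈ L for a fixed n-dimensional subspace L. Then |(1/|G|) ∑_{g∈G} ⟨g(x̂), y_g⟩| ≤ (n^{1/2}(s₁⋯s_d)^{1/2}/(k₁⋯k_d)^{1/2}) · ((1/|G|)∑_{g∈G} ‖y_g‖₂²)^{1/2}, where x̂ = x̂(s̄) is the indicator vector of the box ∏_j{1,…,s_j} and ⟨·,·⟩ is the Euclidean inner product. -/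
/-!
Averaging over signed permutations makes the family `g x̂` isotropic:
`∑_g ⟨g x̂, u⟩² = |G| ∏_j (min(k_j, s_j) / k_j) ‖u‖²` for every `u`. Random signs kill the
off-diagonal terms of `∑_g (g x̂)_v (g x̂)_w`, and a random permutation of `Fin k_j` sends a
given index below `s_j` with probability `min(k_j, s_j) / k_j`.

Expanding each `y_g` in an orthonormal basis `b_1, …, b_n` of `L`, Cauchy–Schwarz over the
pairs `(g, i)` bounds `|∑_g ⟨g x̂, y_g⟩|` by `(∑_{g,i} ⟨g x̂, b_i⟩²)^{1/2} (∑_g ‖y_g‖²)^{1/2}`,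
and isotropy evaluates the first factor as at most `(|G| n ∏_j s_j / k_j)^{1/2}`.
-/

open scoped BigOperators

/-- The group `G` of signed coordinate permutations: a tuple of permutations `σ_j` of
`{1,…,k_j}` and signs `ε_{j,i} ∈ {±1}` (encoded by `Bool`). -/
abbrev SignPerm {d : ℕ} (k : Fin d → ℕ) :=
  (∀ i, Equiv.Perm (Fin (k i))) × (∀ i, Fin (k i) → Bool)

/-- The action `g(x)_{i₁,…,i_d} = ε_{1,i₁}⋯ε_{d,i_d} x_{σ₁(i₁),…,σ_d(i_d)}`. -/
noncomputable def actSP {d : ℕ} (k : Fin d → ℕ) (g : SignPerm k)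
    (x : (∀ i, Fin (k i)) → ℝ) : (∀ i, Fin (k i)) → ℝ :=
  fun v => (∏ i, (if g.2 i (v i) then (1 : ℝ) else -1)) * x (fun i => g.1 i (v i))

open Finset Equiv
open scoped Nat RealInnerProductSpace

lemma abs_sum_mul_le_sqrt_mul_sqrt {ι : Type*} (s : Finset ι) (f g : ι → ℝ) :
    |∑ i ∈ s, f i * g i| ≤ √(∑ i ∈ s, f i ^ 2) * √(∑ i ∈ s, g i ^ 2) := by
  refine abs_le.2 ⟨?_, Real.sum_mul_le_sqrt_mul_sqrt s f g⟩
  have := Real.sum_mul_le_sqrt_mul_sqrt s (fun i => -f i) g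
  simp only [neg_mul, sum_neg_distrib, neg_sq] at this
  linarith

lemma abs_sum_inner_le_of_sum_sq_inner_le {E ι : Type*} [NormedAddCommGroup E]
    [InnerProductSpace ℝ E] [Fintype ι] (L : Submodule ℝ E) [FiniteDimensional ℝ L]
    {c : ℝ} (X : ι → E) (hX : ∀ u, ∑ i, ⟪X i, u⟫ ^ 2 ≤ c * ‖u‖ ^ 2)
    (y : ι → E) (hy : ∀ i, y i ∈ L) :
    |∑ i, ⟪X i, y i⟫| ≤ √(c * Module.finrank ℝ L) * √(∑ i, ‖y i‖ ^ 2) := by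
  set b := stdOrthonormalBasis ℝ L
  have expand : ∀ x, ∀ z ∈ L, ⟪x, z⟫ = ∑ j, ⟪x, b j⟫ * ⟪(b j : E), z⟫ := by
    intro x z hz
    have hrepr := congrArg ((↑) : L → E) (b.sum_repr' ⟨z, hz⟩)
    simp only [Submodule.coe_sum, Submodule.coe_smul, Submodule.coe_inner] at hrepr
    conv_lhs => rw [← hrepr]
    simp only [inner_sum, real_inner_smul_right, mul_comm]
  have parseval : ∀ z ∈ L, ∑ j, ⟪(b j : E), z⟫ ^ 2 = ‖z‖ ^ 2 := by
    intro z hz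
    rw [← real_inner_self_eq_norm_sq, expand z z hz]
    exact sum_congr rfl fun j _ => by rw [sq, real_inner_comm z]
  have hb : ∑ p : ι × _, ⟪X p.1, b p.2⟫ ^ 2 ≤ c * Module.finrank ℝ L := by
    rw [Fintype.sum_prod_type_right]
    calc ∑ j, ∑ i, ⟪X i, b j⟫ ^ 2 ≤ ∑ j, c * ‖(b j : E)‖ ^ 2 :=
          sum_le_sum fun j _ => hX _
      _ = c * Module.finrank ℝ L := by
        have hnorm : ∀ j, ‖(b j : E)‖ = 1 := b.orthonormal.1
        simp [hnorm, mul_comm]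
  have hy2 : ∑ p : ι × _, ⟪(b p.2 : E), y p.1⟫ ^ 2 = ∑ i, ‖y i‖ ^ 2 := by
    rw [Fintype.sum_prod_type]
    exact sum_congr rfl fun i _ => parseval _ (hy i)
  calc |∑ i, ⟪X i, y i⟫|
      = |∑ p : ι × _, ⟪X p.1, b p.2⟫ * ⟪(b p.2 : E), y p.1⟫| := by
        rw [Fintype.sum_prod_type]
        exact congrArg abs (sum_congr rfl fun i _ => expand _ _ (hy i))
    _ ≤ √(∑ p : ι × _, ⟪X p.1, b p.2⟫ ^ 2) * √(∑ p : ι × _, ⟪(b p.2 : E), y p.1⟫ ^ 2) :=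
        abs_sum_mul_le_sqrt_mul_sqrt _ _ _
    _ ≤ √(c * Module.finrank ℝ L) * √(∑ i, ‖y i‖ ^ 2) := by
        rw [hy2]; gcongr

lemma abs_sum_sum_mul_le_of_sum_sq_le {ι V : Type*} [Fintype ι] [Fintype V]
    (L : Submodule ℝ (V → ℝ)) {c : ℝ} (X : ι → V → ℝ)
    (hX : ∀ u : V → ℝ, ∑ i, (∑ v, X i v * u v) ^ 2 ≤ c * ∑ v, u v ^ 2)
    (y : ι → V → ℝ) (hy : ∀ i, y i ∈ L) :
    |∑ i, ∑ v, X i v * y i v| ≤ √(c * Module.finrank ℝ L) * √(∑ i, ∑ v, y i v ^ 2) := by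
  let e := (WithLp.linearEquiv 2 ℝ (V → ℝ)).symm
  have hinner : ∀ x z, ⟪e x, e z⟫ = ∑ v, x v * z v := fun x z => by
    simp [e, PiLp.inner_apply, mul_comm]
  have hnorm : ∀ z, ‖e z‖ ^ 2 = ∑ v, z v ^ 2 := fun z => by
    simp [e, EuclideanSpace.norm_sq_eq]
  have hXe : ∀ u, ∑ i, ⟪e (X i), u⟫ ^ 2 ≤ c * ‖u‖ ^ 2 := by
    intro u
    obtain ⟨z, rfl⟩ := e.surjective u
    simpa only [hinner, hnorm] using hX z
  have h := abs_sum_inner_le_of_sum_sq_inner_le (L.map e.toLinearMap) _ hXe (fun i => e (y i))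
    fun i => Submodule.mem_map_of_mem (hy i)
  simpa only [LinearEquiv.finrank_map_eq, hinner, hnorm] using h

lemma sum_sign_mul_sign {α : Type*} [Fintype α] [DecidableEq α] (a b : α) :
    ∑ e : α → Bool, (if e a then (1 : ℝ) else -1) * (if e b then 1 else -1) =
      if a = b then 2 ^ Fintype.card α else 0 := by
  split_ifs with hab
  · subst hab
    have hsq : ∀ e : α → Bool, (if e a then (1 : ℝ) else -1) * (if e a then 1 else -1) = 1 := by
      intro e; cases e a <;> norm_num
    simp [hsq]
  · -- flipping `e a` negates the summand, so the sum vanishes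
    refine sum_ninvolution (fun e => Function.update e a (!e a)) (fun e => ?_) (fun e _ h => ?_)
      (fun _ => mem_univ _) (fun e => ?_)
    · rw [Function.update_self, Function.update_of_ne (Ne.symm hab)]
      cases e a <;> cases e b <;> norm_num
    · simpa using congrFun h a
    · simp

lemma card_smul_sum_perm_apply {α M : Type*} [Fintype α] [DecidableEq α] [AddCommMonoid M]
    (a : α) (f : α → M) :
    Fintype.card α • ∑ σ : Perm α, f (σ a) = Fintype.card (Perm α) • ∑ x, f x := by
  have hmove : ∀ x, ∑ σ : Perm α, f (σ a) = ∑ σ : Perm α, f (σ x) := fun x =>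
    Fintype.sum_equiv (Equiv.mulRight (swap x a)) _ _ fun σ => by simp [Perm.mul_apply]
  calc Fintype.card α • ∑ σ : Perm α, f (σ a) = ∑ x : α, ∑ σ : Perm α, f (σ x) := by
        simp [← hmove]
    _ = ∑ σ : Perm α, ∑ x, f (σ x) := sum_comm
    _ = Fintype.card (Perm α) • ∑ x, f x := by simp [Equiv.sum_comp]

lemma sum_perm_indicator_val_lt {m : ℕ} (a : Fin m) (t : ℕ) :
    ∑ σ : Perm (Fin m), (if (σ a : ℕ) < t then (1 : ℝ) else 0) = m ! * (min m t / m : ℝ) := by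
  have hm : (0 : ℝ) < m := by exact_mod_cast a.pos
  have h := card_smul_sum_perm_apply a (fun x : Fin m => if (x : ℕ) < t then (1 : ℝ) else 0)
  simp only [Fintype.card_fin, Fintype.card_perm, nsmul_eq_mul, sum_boole,
    Fin.card_filter_val_lt] at h
  rw [sum_boole, ← mul_div_assoc, eq_div_iff hm.ne', mul_comm, h]

section SignPerm

variable {d : ℕ} (k s : Fin d → ℕ)

lemma card_signPerm :
    Fintype.card (SignPerm k) = (∏ j, (k j)!) * ∏ j, 2 ^ k j := by
  simp [Fintype.card_prod, Fintype.card_pi, Fintype.card_perm]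

lemma actSP_mul_actSP (g : SignPerm k) (x : (∀ i, Fin (k i)) → ℝ) (v w : ∀ i, Fin (k i)) :
    actSP k g x v * actSP k g x w =
      (∏ j, (if g.2 j (v j) then (1 : ℝ) else -1) * (if g.2 j (w j) then 1 else -1)) *
        (x (fun j => g.1 j (v j)) * x (fun j => g.1 j (w j))) := by
  simp only [actSP, prod_mul_distrib]
  ring

lemma sum_prod_sign_mul_sign (v w : ∀ i, Fin (k i)) :
    ∑ ε : ∀ i, Fin (k i) → Bool,
        ∏ j, (if ε j (v j) then (1 : ℝ) else -1) * (if ε j (w j) then 1 else -1) =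
      if v = w then ∏ j, 2 ^ k j else 0 := by
  rw [← Fintype.prod_sum fun j (e : Fin (k j) → Bool) =>
    (if e (v j) then (1 : ℝ) else -1) * (if e (w j) then 1 else -1)]
  simp only [sum_sign_mul_sign, Fintype.card_fin, Fintype.prod_ite_zero]
  simp [funext_iff]

lemma sum_boxIndicator_perm_apply (v : ∀ i, Fin (k i)) :
    ∑ σ : ∀ i, Perm (Fin (k i)), boxIndicator k s (fun j => σ j (v j)) =
      ∏ j, (k j)! * (min (k j) (s j) / k j : ℝ) := by
  have hbox : ∀ z, boxIndicator k s z = ∏ j, if (z j : ℕ) < s j then (1 : ℝ) else 0 :=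
    fun z => by simp [boxIndicator, Fintype.prod_boole]
  simp only [hbox]
  rw [← Fintype.prod_sum fun j (σ : Perm (Fin (k j))) =>
    if (σ (v j) : ℕ) < s j then (1 : ℝ) else 0]
  simp only [sum_perm_indicator_val_lt]

lemma sum_actSP_boxIndicator_mul_actSP (v w : ∀ i, Fin (k i)) :
    ∑ g : SignPerm k, actSP k g (boxIndicator k s) v * actSP k g (boxIndicator k s) w =
      if v = w then Fintype.card (SignPerm k) * ∏ j, (min (k j) (s j) / k j : ℝ) else 0 := by
  simp only [actSP_mul_actSP, Fintype.sum_prod_type, ← mul_sum, ← sum_mul,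
    sum_prod_sign_mul_sign]
  split_ifs with hvw
  · subst hvw
    have hsq : ∀ z, boxIndicator k s z * boxIndicator k s z = boxIndicator k s z := fun z => by
      unfold boxIndicator; split_ifs <;> norm_num
    simp only [hsq, sum_boxIndicator_perm_apply, card_signPerm, prod_mul_distrib]
    push_cast
    ring
  · simp

lemma sum_sq_sum_actSP_boxIndicator_mul (u : (∀ i, Fin (k i)) → ℝ) :
    ∑ g : SignPerm k, (∑ v, actSP k g (boxIndicator k s) v * u v) ^ 2 =
      Fintype.card (SignPerm k) * (∏ j, (min (k j) (s j) / k j : ℝ)) * ∑ v, u v ^ 2 := by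
  set a := fun g => actSP k g (boxIndicator k s)
  have hexpand : ∀ g, (∑ v, a g v * u v) ^ 2 = ∑ v, ∑ w, a g v * a g w * (u v * u w) := by
    intro g
    rw [sq, sum_mul_sum]
    exact sum_congr rfl fun v _ => sum_congr rfl fun w _ => by ring
  calc ∑ g, (∑ v, a g v * u v) ^ 2 = ∑ v, ∑ w, (∑ g, a g v * a g w) * (u v * u w) := by
        simp only [hexpand, sum_mul]
        rw [sum_comm]
        exact sum_congr rfl fun v _ => sum_comm
    _ = _ := by
        simp only [a, sum_actSP_boxIndicator_mul_actSP, ite_mul, zero_mul, sum_ite_eq, mem_univ,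
          if_true, mul_sum, sq, mul_assoc]

end SignPerm

theorem stmt_16_general {d : ℕ} (k s : Fin d → ℕ)
    (n : ℕ) (L : Submodule ℝ ((∀ i, Fin (k i)) → ℝ)) (hL : Module.finrank ℝ (↥L) = n)
    (y : SignPerm k → (∀ i, Fin (k i)) → ℝ) (hy : ∀ g, y g ∈ L) :
    |(1 / (Fintype.card (SignPerm k) : ℝ)) *
        ∑ g : SignPerm k, ∑ v, actSP k g (boxIndicator k s) v * y g v| ≤
      Real.sqrt n * Real.sqrt (∏ j, (s j : ℝ)) / Real.sqrt (∏ j, (k j : ℝ)) *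
        Real.sqrt ((1 / (Fintype.card (SignPerm k) : ℝ)) *
          ∑ g : SignPerm k, ∑ v, (y g v) ^ 2) := by
  set N : ℝ := (Fintype.card (SignPerm k) : ℝ)
  have hN : 0 < N := Nat.cast_pos.mpr Fintype.card_pos
  have hiso : ∀ u : (∀ i, Fin (k i)) → ℝ,
      ∑ g : SignPerm k, (∑ v, actSP k g (boxIndicator k s) v * u v) ^ 2 ≤
        N * (∏ j, (s j / k j : ℝ)) * ∑ v, u v ^ 2 := by
    intro u
    rw [sum_sq_sum_actSP_boxIndicator_mul]
    gcongr with j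
    exact_mod_cast min_le_right _ _
  have hbound := abs_sum_sum_mul_le_of_sum_sq_le L _ hiso y hy
  rw [hL] at hbound
  calc |1 / N * ∑ g : SignPerm k, ∑ v, actSP k g (boxIndicator k s) v * y g v|
      = |∑ g : SignPerm k, ∑ v, actSP k g (boxIndicator k s) v * y g v| / N := by
        rw [abs_mul, abs_of_pos (one_div_pos.2 hN), one_div_mul_eq_div]
    _ ≤ √(N * (∏ j, (s j / k j : ℝ)) * n) * √(∑ g : SignPerm k, ∑ v, y g v ^ 2) / N := by
        gcongr
    _ = _ := by
        rw [prod_div_distrib, Real.sqrt_mul (by positivity), Real.sqrt_mul hN.le,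
          Real.sqrt_div' _ (by positivity), Real.sqrt_mul (by positivity), one_div,
          Real.sqrt_inv]
        field_simp
        rw [Real.sq_sqrt hN.le]
        ring

/-- Gluskin's averaging estimate: for `y_g ∈ L` with `dim L = n`,
`|𝔼_g ⟨g(x̂), y_g⟩| ≤ √n (s₁⋯s_d)^{1/2}/(k₁⋯k_d)^{1/2} (𝔼_g ‖y_g‖₂²)^{1/2}`. -/
theorem stmt_16 {d : ℕ} (k s : Fin d → ℕ) (hs1 : ∀ j, 1 ≤ s j) (hsk : ∀ j, s j ≤ k j)
    (n : ℕ) (L : Submodule ℝ ((∀ i, Fin (k i)) → ℝ)) (hL : Module.finrank ℝ (↥L) = n)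
    (y : SignPerm k → (∀ i, Fin (k i)) → ℝ) (hy : ∀ g, y g ∈ L) :
    |(1 / (Fintype.card (SignPerm k) : ℝ)) *
        ∑ g : SignPerm k, ∑ v, actSP k g (boxIndicator k s) v * y g v| ≤
      Real.sqrt n * Real.sqrt (∏ j, (s j : ℝ)) / Real.sqrt (∏ j, (k j : ℝ)) *
        Real.sqrt ((1 / (Fintype.card (SignPerm k) : ℝ)) *
          ∑ g : SignPerm k, ∑ v, (y g v) ^ 2) :=
  stmt_16_general k s n L hL y hy
end
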